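/- arXiv:1802.02640 — 3 statements merged into one kernel-verified Lean document; each statement's English description precedes it below -/
import Mathlib

section
/- For a (k+1,k,z) system using Staircase codes (n = k+1, one straggler), the cumulative distribution function of the Master's waiting time satisfies, for all t > 0: F_{T_SC}(t) = F(t_{k+1})^{k+1} + (k+1) · F(t_k)^k · (1 − F(t_{k+1})), where F(s) = 1 − exp(−λ(k−z)s) for s ≥ 0 (and F(s)=0 for s<0), t_k = max{ t − c/(k−z), 0 }, and t_{k+1} = max{ ((k+1−z)/(k−z))·(t − c/(k+1−z)), 0 }. -/
open MeasureTheory ProbabilityTheory Real Finset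

/-- The `d`-th order statistic (the `d`-th smallest value, `1`-indexed) of the
values `f 0, …, f (n-1)`. -/
noncomputable def orderStat {n : ℕ} (f : Fin n → ℝ) (d : ℕ) : ℝ :=
  ((List.ofFn f).insertionSort (· ≤ ·)).getD (d - 1) 0

/-- The `m`-th harmonic number `H_m = ∑_{i=1}^m 1/i` (with `H_0 = 0`), as a real number. -/
noncomputable def harmonic' (m : ℕ) : ℝ := ∑ i ∈ Finset.range m, (1 : ℝ) / (i + 1)

/-- The Master's waiting time under Staircase codes:
`T_SC = min_{d ∈ {k,…,n}} ((k-z)/(d-z)) ⬝ T_(d)`, where the service times are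
`T i = c/(k-z) + T' i`. -/
noncomputable def TSC (n k z : ℕ) (hkn : k ≤ n) (c : ℝ) (T' : Fin n → ℝ) : ℝ :=
  (Finset.Icc k n).inf' (Finset.nonempty_Icc.mpr hkn) fun d =>
    ((k : ℝ) - z) / ((d : ℝ) - z) *
      orderStat (fun i => c / ((k : ℝ) - z) + T' i) d

/-- The CDF `F(s) = 1 - exp(-θ s)` for `s ≥ 0`, and `F(s) = 0` for `s < 0`. -/
noncomputable def Fcdf (θ s : ℝ) : ℝ := if 0 ≤ s then 1 - Real.exp (-θ * s) else 0

/-!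
With one straggler only `d = k` (where `α_k = 1`) and `d = k + 1` compete. In terms of the
exponential parts `T'_j` and the thresholds `s₁ = t - c/(k-z) < s₂ = ((k+1-z)/(k-z))(t - c/(k+1-z))`,
the Master is done by time `t` iff all but one `T'_j` are `≤ s₁` or all are `≤ s₂`. This event is
the disjoint union of "all `T'_j ≤ s₂`" and, for each `i`, "`T'_i > s₂` and every other
`T'_j ≤ s₁`", and independence factors the probability of each piece into values of `F`.
-/

theorem List.Pairwise.getD_le_iff_lt_countP {α : Type*} [LinearOrder α] {l : List α}
    (hl : l.Pairwise (· ≤ ·)) {i : ℕ} (hi : i < l.length) (d s : α) :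
    l.getD i d ≤ s ↔ i < l.countP (· ≤ s) := by
  induction l generalizing i with
  | nil => simp at hi
  | cons a l ih =>
    rw [List.pairwise_cons] at hl
    by_cases ha : a ≤ s
    · cases i with
      | zero => simp [ha]
      | succ i =>
        rw [List.getD_cons_succ, List.countP_cons_of_pos (by simpa), ih hl.2 (by simpa using hi)]
        omega
    · have hgt : ∀ x ∈ a :: l, ¬ x ≤ s := by
        rintro x (_ | ⟨_, hx⟩) hxs
        exacts [ha hxs, ha ((hl.1 x hx).trans hxs)]
      rw [List.countP_eq_zero.mpr (by simpa using hgt), List.getD_eq_getElem _ _ hi]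
      simpa using hgt _ (List.getElem_mem hi)

theorem List.countP_ofFn {α : Type*} {n : ℕ} (g : Fin n → α) (p : α → Prop) [DecidablePred p] :
    (List.ofFn g).countP (p ·) = #{i | p (g i)} := by
  rw [← Multiset.coe_countP, ← Fin.univ_val_map, Multiset.countP_map]
  rfl

theorem orderStat_le_iff {n : ℕ} (g : Fin n → ℝ) {d : ℕ} (hd : 1 ≤ d) (hdn : d ≤ n) (s : ℝ) :
    orderStat g d ≤ s ↔ d ≤ #{i | g i ≤ s} := by
  have hlen : ((List.ofFn g).insertionSort (· ≤ ·)).length = n := by simp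
  rw [orderStat, (List.pairwise_insertionSort _ _).getD_le_iff_lt_countP (by omega),
    (List.perm_insertionSort _ _).countP_eq, List.countP_ofFn g (· ≤ s)]
  omega

theorem orderStat_self_le_iff {n : ℕ} (hn : 1 ≤ n) (g : Fin n → ℝ) (s : ℝ) :
    orderStat g n ≤ s ↔ ∀ i, g i ≤ s := by
  rw [orderStat_le_iff g hn le_rfl]
  simpa using (card_filter_le (univ : Finset (Fin n)) (g · ≤ s)).ge_iff_eq.trans card_filter_eq_iff

theorem orderStat_pred_le_iff {k : ℕ} (hk : 1 ≤ k) (g : Fin (k + 1) → ℝ) (s : ℝ) :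
    orderStat g k ≤ s ↔ ∃ i, ∀ j, j ≠ i → g j ≤ s := by
  have hcard := card_filter_add_card_filter_not (s := univ) (fun i => g i ≤ s)
  rw [card_univ, Fintype.card_fin] at hcard
  rw [orderStat_le_iff g hk k.le_succ,
    show k ≤ #{i | g i ≤ s} ↔ #{i | ¬ g i ≤ s} ≤ 1 by omega, card_le_one_iff_subset_singleton]
  simp only [subset_iff, mem_filter, mem_univ, true_and, mem_singleton]
  exact exists_congr fun i => forall_congr' fun j => not_imp_comm

theorem TSC_one_straggler_le_iff {k z : ℕ} (hzk : z < k) (c : ℝ) (T' : Fin (k + 1) → ℝ) (t : ℝ) :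
    TSC (k + 1) k z k.le_succ c T' ≤ t ↔
      (∃ i, ∀ j, j ≠ i → T' j ≤ t - c / ((k : ℝ) - z)) ∨
        ∀ j, T' j ≤ ((k : ℝ) + 1 - z) / ((k : ℝ) - z) * (t - c / ((k : ℝ) + 1 - z)) := by
  have hkz : (0 : ℝ) < (k : ℝ) - z := sub_pos.mpr (by exact_mod_cast hzk)
  have hkz' : (0 : ℝ) < (k : ℝ) + 1 - z := by linarith
  have hIcc : Icc k (k + 1) = {k, k + 1} := by ext; simp; omega
  have hthreshold : t / (((k : ℝ) - z) / ((k : ℝ) + 1 - z)) - c / ((k : ℝ) - z) =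
      ((k : ℝ) + 1 - z) / ((k : ℝ) - z) * (t - c / ((k : ℝ) + 1 - z)) := by
    field_simp
  rw [TSC, inf'_le_iff, hIcc]
  simp only [mem_insert, mem_singleton, exists_eq_or_imp, exists_eq_left]
  refine or_congr ?_ ?_
  · rw [div_self hkz.ne', one_mul, orderStat_pred_le_iff (by omega)]
    simp only [le_sub_iff_add_le']
  · rw [Nat.cast_succ, mul_comm, ← le_div_iff₀ (div_pos hkz hkz'),
      orderStat_self_le_iff (by omega), ← hthreshold]
    simp only [le_sub_iff_add_le']

theorem ProbabilityTheory.iIndepFun.measureReal_iInter_preimage {Ω ι : Type*}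
    [MeasurableSpace Ω] {μ : Measure Ω} [Fintype ι] {β : ι → Type*} [∀ i, MeasurableSpace (β i)]
    {X : ∀ i, Ω → β i}
    (hX : iIndepFun X μ) {S : ∀ i, Set (β i)} (hS : ∀ i, MeasurableSet (S i)) :
    μ.real (⋂ i, X i ⁻¹' S i) = ∏ i, μ.real (X i ⁻¹' S i) := by
  simp only [measureReal_def, hX.meas_iInter fun i => ⟨S i, hS i, rfl⟩, ENNReal.toReal_prod]

section OneExceedance

variable {Ω ι : Type*} {X : ι → Ω → ℝ} {a b : ℝ}

theorem setOf_exists_forall_ne_le_or_forall_le [DecidableEq ι] (hab : a ≤ b) :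
    {ω | (∃ i, ∀ j, j ≠ i → X j ω ≤ a) ∨ ∀ j, X j ω ≤ b} =
      (⋂ j, X j ⁻¹' Set.Iic b) ∪ ⋃ i, ⋂ j, X j ⁻¹' (if j = i then Set.Ioi b else Set.Iic a) := by
  ext ω
  simp only [Set.mem_ofPred_eq, Set.mem_union, Set.mem_iInter, Set.mem_iUnion, Set.mem_preimage,
    Set.mem_Iic]
  constructor
  · rintro (⟨i, hi⟩ | hall)
    · by_cases hall' : ∀ j, X j ω ≤ b
      · exact Or.inl hall'
      · obtain ⟨j₀, hj₀⟩ := not_forall.mp hall'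
        obtain rfl : j₀ = i := by
          by_contra hne
          exact hj₀ ((hi j₀ hne).trans hab)
        refine Or.inr ⟨j₀, fun j => ?_⟩
        split_ifs with hj
        · exact hj ▸ lt_of_not_ge hj₀
        · exact hi j hj
    · exact Or.inl hall
  · rintro (hall | ⟨i, hi⟩)
    · exact Or.inr hall
    · exact Or.inl ⟨i, fun j hj => by simpa [hj] using hi j⟩

variable [MeasurableSpace Ω] {μ : Measure Ω} [IsProbabilityMeasure μ] [Fintype ι]

theorem measureReal_exists_forall_ne_le_or_forall_le (hX : ∀ i, Measurable (X i))
    (hind : iIndepFun X μ) (hab : a ≤ b) {p q : ℝ} (hp : ∀ i, μ.real (X i ⁻¹' Set.Iic a) = p)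
    (hq : ∀ i, μ.real (X i ⁻¹' Set.Iic b) = q) :
    μ.real {ω | (∃ i, ∀ j, j ≠ i → X j ω ≤ a) ∨ ∀ j, X j ω ≤ b} =
      q ^ Fintype.card ι + Fintype.card ι * p ^ (Fintype.card ι - 1) * (1 - q) := by
  classical
  set E : ι → ι → Set ℝ := fun i j => if j = i then Set.Ioi b else Set.Iic a
  have hE : ∀ i j, MeasurableSet (E i j) := fun i j => by
    by_cases hj : j = i <;> simp [E, hj, measurableSet_Ioi, measurableSet_Iic]
  have hexceed : ∀ i, μ.real (⋂ j, X j ⁻¹' E i j) = (1 - q) * p ^ (Fintype.card ι - 1) := by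
    intro i
    rw [hind.measureReal_iInter_preimage (hE i), ← mul_prod_erase univ _ (mem_univ i)]
    congr 1
    · rw [show E i i = (Set.Iic b)ᶜ by simp [E], Set.preimage_compl,
        probReal_compl_eq_one_sub (hX i measurableSet_Iic), hq]
    · have hrest : ∀ j ∈ univ.erase i, μ.real (X j ⁻¹' E i j) = p := fun j hj => by
        rw [show E i j = Set.Iic a from if_neg (ne_of_mem_erase hj), hp]
      rw [prod_congr rfl hrest, prod_const, card_erase_of_mem (mem_univ i), card_univ]
  have hdisj : Disjoint (⋂ j, X j ⁻¹' Set.Iic b) (⋃ i, ⋂ j, X j ⁻¹' E i j) := by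
    refine Set.disjoint_left.mpr fun ω hle hexc => ?_
    obtain ⟨i, hi⟩ := Set.mem_iUnion.mp hexc
    have hlt : b < X i ω := by simpa [E] using Set.mem_iInter.mp hi i
    exact hlt.not_ge (Set.mem_iInter.mp hle i)
  have hpair : Pairwise (Function.onFun Disjoint fun i => ⋂ j, X j ⁻¹' E i j) := by
    refine fun i i' hne => Set.disjoint_left.mpr fun ω hi hi' => ?_
    have hle : X i' ω ≤ a := by simpa [E, hne.symm] using Set.mem_iInter.mp hi i'
    have hlt : b < X i' ω := by simpa [E] using Set.mem_iInter.mp hi' i'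
    linarith
  rw [setOf_exists_forall_ne_le_or_forall_le hab, measureReal_union hdisj
    (.iUnion fun i => .iInter fun j => hX j (hE i j)),
    measureReal_iUnion_fintype hpair fun i => .iInter fun j => hX j (hE i j),
    hind.measureReal_iInter_preimage fun _ => measurableSet_Iic]
  simp only [hq, hexceed, prod_const, sum_const, card_univ, nsmul_eq_mul]
  ring

end OneExceedance

theorem measureReal_preimage_Iic_eq_Fcdf {Ω : Type*} [MeasurableSpace Ω] {μ : Measure Ω}
    [IsProbabilityMeasure μ] {X : Ω → ℝ} (hX : Measurable X)
    (hnonneg : ∀ ω, 0 ≤ X ω) {θ : ℝ}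
    (htail : ∀ t : ℝ, 0 ≤ t → μ {ω | t < X ω} = ENNReal.ofReal (Real.exp (-θ * t))) (s : ℝ) :
    μ.real (X ⁻¹' Set.Iic s) = Fcdf θ s := by
  unfold Fcdf
  split_ifs with hs
  · rw [← Set.compl_Ioi, Set.preimage_compl, probReal_compl_eq_one_sub (hX measurableSet_Ioi),
      measureReal_def, show X ⁻¹' Set.Ioi s = {ω | s < X ω} from rfl, htail s hs,
      ENNReal.toReal_ofReal (exp_nonneg _)]
  · have hempty : X ⁻¹' Set.Iic s = ∅ :=
      Set.eq_empty_of_forall_notMem fun ω (hω : X ω ≤ s) => hs ((hnonneg ω).trans hω)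
    rw [hempty, measureReal_empty]

theorem Fcdf_max_zero (θ s : ℝ) : Fcdf θ (max s 0) = Fcdf θ s := by
  rcases le_total 0 s with hs | hs
  · rw [max_eq_left hs]
  · rcases hs.lt_or_eq with hs | rfl
    · simp [Fcdf, hs.le, hs.not_ge]
    · rw [max_self]

theorem staircase_waiting_time_cdf_one_straggler_general
    {Ω : Type*} [MeasurableSpace Ω] (μ : Measure Ω) [IsProbabilityMeasure μ]
    (k z : ℕ) (hzk : z < k)
    (lam c : ℝ)
    (T' : Fin (k + 1) → Ω → ℝ)
    (hmeas : ∀ i, Measurable (T' i))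
    (hindep : iIndepFun T' μ)
    (hnonneg : ∀ i ω, 0 ≤ T' i ω)
    (hccdf : ∀ i, ∀ t : ℝ, 0 ≤ t →
      μ {ω | t < T' i ω} = ENNReal.ofReal (Real.exp (-(lam * ((k : ℝ) - z)) * t))) :
    ∀ t : ℝ, 0 < t →
      (μ {ω | TSC (k + 1) k z (Nat.le_succ k) c (fun i => T' i ω) ≤ t}).toReal =
        Fcdf (lam * ((k : ℝ) - z))
            (max ((((k : ℝ) + 1 - z) / ((k : ℝ) - z)) * (t - c / ((k : ℝ) + 1 - z))) 0) ^ (k + 1)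
          + ((k : ℝ) + 1) *
            Fcdf (lam * ((k : ℝ) - z)) (max (t - c / ((k : ℝ) - z)) 0) ^ k *
            (1 - Fcdf (lam * ((k : ℝ) - z))
              (max ((((k : ℝ) + 1 - z) / ((k : ℝ) - z)) * (t - c / ((k : ℝ) + 1 - z))) 0)) := by
  intro t ht
  have hkz : (0 : ℝ) < (k : ℝ) - z := sub_pos.mpr (by exact_mod_cast hzk)
  have hkz' : (0 : ℝ) < (k : ℝ) + 1 - z := by linarith
  have hthresholds : t - c / ((k : ℝ) - z) ≤
      ((k : ℝ) + 1 - z) / ((k : ℝ) - z) * (t - c / ((k : ℝ) + 1 - z)) := by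
    have hgap : ((k : ℝ) + 1 - z) / ((k : ℝ) - z) * (t - c / ((k : ℝ) + 1 - z)) =
        t - c / ((k : ℝ) - z) + t / ((k : ℝ) - z) := by
      field_simp
      ring
    linarith [div_pos ht hkz]
  have hcdf i := measureReal_preimage_Iic_eq_Fcdf (hmeas i) (hnonneg i) (hccdf i)
  simp_rw [TSC_one_straggler_le_iff hzk]
  rw [← measureReal_def, measureReal_exists_forall_ne_le_or_forall_le hmeas hindep hthresholds
    (fun i => hcdf i _) (fun i => hcdf i _), Fintype.card_fin, Fcdf_max_zero, Fcdf_max_zero]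
  push_cast
  rfl

/-- exact CDF of the Master's waiting time for a `(k+1,k,z)` system
(one straggler) using Staircase codes. -/
theorem staircase_waiting_time_cdf_one_straggler
    {Ω : Type*} [MeasurableSpace Ω] (μ : Measure Ω) [IsProbabilityMeasure μ]
    (k z : ℕ) (hzk : z < k)
    (lam c : ℝ) (hlam : 0 < lam) (hc : 0 ≤ c)
    (T' : Fin (k + 1) → Ω → ℝ)
    (hmeas : ∀ i, Measurable (T' i))
    (hindep : iIndepFun T' μ)
    (hnonneg : ∀ i ω, 0 ≤ T' i ω)
    (hccdf : ∀ i, ∀ t : ℝ, 0 ≤ t →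
      μ {ω | t < T' i ω} = ENNReal.ofReal (Real.exp (-(lam * ((k : ℝ) - z)) * t))) :
    ∀ t : ℝ, 0 < t →
      (μ {ω | TSC (k + 1) k z (Nat.le_succ k) c (fun i => T' i ω) ≤ t}).toReal =
        Fcdf (lam * ((k : ℝ) - z))
            (max ((((k : ℝ) + 1 - z) / ((k : ℝ) - z)) * (t - c / ((k : ℝ) + 1 - z))) 0) ^ (k + 1)
          + ((k : ℝ) + 1) *
            Fcdf (lam * ((k : ℝ) - z)) (max (t - c / ((k : ℝ) - z)) 0) ^ k *
            (1 - Fcdf (lam * ((k : ℝ) - z))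
              (max ((((k : ℝ) + 1 - z) / ((k : ℝ) - z)) * (t - c / ((k : ℝ) + 1 - z))) 0)) :=
  staircase_waiting_time_cdf_one_straggler_general μ k z hzk lam c T' hmeas hindep hnonneg hccdf
end

section
/- The bounded-difference constant n−k for the function d is tight: there exist a vector (t_1,...,t_n) ∈ ℝ₊ⁿ, a coordinate i, and a value t'_i ∈ ℝ₊ such that |d(t_1,...,t_i,...,t_n) − d(t_1,...,t'_i,...,t_n)| = n−k, where d(t_1,...,t_n) = argmin{ ((k−z)/(j−z))·t_(j) : j ∈ {k,...,n} }. -/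
open MeasureTheory ProbabilityTheory Real Finset

/-- The number of workers minimizing the Master's waiting time:
`d(t_1,…,t_n) = argmin { ((k-z)/(i-z)) ⬝ t_(i) : i ∈ {k,…,n} }`,
ties broken by taking the smallest minimizing index. -/
noncomputable def dsel (n k z : ℕ) (t : Fin n → ℝ) : ℕ :=
  sInf {i : ℕ | i ∈ Finset.Icc k n ∧
    ∀ j ∈ Finset.Icc k n,
      ((k : ℝ) - z) / ((i : ℝ) - z) * orderStat t i ≤
        ((k : ℝ) - z) / ((j : ℝ) - z) * orderStat t j}

/-!
Take `t_j = max(0, j - z)` for `j = 1, …, n`. Then `t_(m) = m - z` for `m ≥ k`, so every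
cost `((k-z)/(m-z)) ⬝ t_(m)` equals `k - z` and the tie-break gives `d = k`. Lowering the
last entry from `n - z` to `n - 1 - z` keeps the vector sorted and changes only `t_(n)`,
whose cost drops to `(k-z)(n-1-z)/(n-z) < k - z`; now `d = n`.
-/

open Function

lemma orderStat_of_monotone {n : ℕ} {f : Fin n → ℝ} (hf : Monotone f)
    {m : ℕ} (h1 : 1 ≤ m) (h2 : m ≤ n) :
    orderStat f m = f ⟨m - 1, by omega⟩ := by
  unfold orderStat
  rw [List.Pairwise.insertionSort_eq (List.sortedLE_ofFn_iff.mpr hf).pairwise,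
    List.getD_eq_getElem _ _ (by simpa using by omega : m - 1 < (List.ofFn f).length)]
  simp

noncomputable def dselCost (k z : ℕ) {n : ℕ} (t : Fin n → ℝ) (i : ℕ) : ℝ :=
  ((k : ℝ) - z) / ((i : ℝ) - z) * orderStat t i

lemma dsel_eq_of_isLeast {n k z : ℕ} {t : Fin n → ℝ} {m : ℕ} (hm : m ∈ Icc k n)
    (hle : ∀ j ∈ Icc k n, dselCost k z t m ≤ dselCost k z t j)
    (hlt : ∀ j ∈ Icc k n, j < m → dselCost k z t m < dselCost k z t j) :
    dsel n k z t = m := by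
  refine IsLeast.csInf_eq ⟨⟨hm, hle⟩, fun j ⟨hj, hj_le⟩ => ?_⟩
  by_contra! hjm
  exact (hlt j hj hjm).not_ge (hj_le m hm)

noncomputable def ramp (z c j : ℕ) : ℝ := max 0 (((min j c : ℕ) : ℝ) - z)

lemma ramp_monotone (z c : ℕ) : Monotone (ramp z c) := fun a b hab => by
  unfold ramp
  gcongr

lemma ramp_of_le {z c j : ℕ} (hz : z ≤ min j c) : ramp z c j = ((min j c : ℕ) : ℝ) - z :=
  max_eq_right (sub_nonneg.2 (by exact_mod_cast hz))

noncomputable def rampVec (n z c : ℕ) : Fin n → ℝ := fun j => ramp z c ((j : ℕ) + 1)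

lemma orderStat_rampVec {n z c m : ℕ} (h1 : 1 ≤ m) (h2 : m ≤ n) :
    orderStat (rampVec n z c) m = ramp z c m := by
  have hmono : Monotone (rampVec n z c) := fun a b hab =>
    ramp_monotone z c (Nat.add_le_add_right (Fin.le_def.1 hab) 1)
  rw [orderStat_of_monotone hmono h1 h2, rampVec]
  congr 1
  dsimp only
  omega

lemma dselCost_rampVec {n k z c m : ℕ} (hzk : z < k) (hm : m ∈ Icc k n) (hmc : m ≤ c) :
    dselCost k z (rampVec n z c) m = k - z := by
  obtain ⟨hkm, hmn⟩ := mem_Icc.1 hm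
  have hzm : (z : ℝ) < m := by exact_mod_cast hzk.trans_le hkm
  rw [dselCost, orderStat_rampVec (by omega) hmn, ramp_of_le (by omega), min_eq_left hmc]
  field_simp [(sub_pos.2 hzm).ne']

lemma dselCost_rampVec_pred_lt {n k z : ℕ} (hzk : z < k) (hkn : k < n) :
    dselCost k z (rampVec n z (n - 1)) n < k - z := by
  have hzk' : (z : ℝ) < k := by exact_mod_cast hzk
  have hzn : (z : ℝ) < n := by exact_mod_cast hzk.trans hkn
  rw [dselCost, orderStat_rampVec (by omega) le_rfl, ramp_of_le (by omega),
    min_eq_right (Nat.sub_le n 1), Nat.cast_pred (by omega), div_mul_eq_mul_div,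
    div_lt_iff₀ (sub_pos.2 hzn)]
  nlinarith

lemma dsel_rampVec_self {n k z : ℕ} (hzk : z < k) (hkn : k ≤ n) :
    dsel n k z (rampVec n z n) = k := by
  refine dsel_eq_of_isLeast (left_mem_Icc.2 hkn) (fun j hj => ?_)
    (fun j hj hjk => absurd (mem_Icc.1 hj).1 hjk.not_ge)
  rw [dselCost_rampVec hzk (left_mem_Icc.2 hkn) hkn, dselCost_rampVec hzk hj (mem_Icc.1 hj).2]

lemma dsel_rampVec_pred {n k z : ℕ} (hzk : z < k) (hkn : k < n) :
    dsel n k z (rampVec n z (n - 1)) = n := by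
  have hlt : ∀ j ∈ Icc k n, j < n →
      dselCost k z (rampVec n z (n - 1)) n < dselCost k z (rampVec n z (n - 1)) j :=
    fun j hj hjn => by
      rw [dselCost_rampVec hzk hj (by omega)]
      exact dselCost_rampVec_pred_lt hzk hkn
  refine dsel_eq_of_isLeast (right_mem_Icc.2 hkn.le) (fun j hj => ?_) hlt
  rcases (mem_Icc.1 hj).2.lt_or_eq with hjn | rfl
  · exact (hlt j hj hjn).le
  · exact le_rfl

lemma update_rampVec_last {n z : ℕ} (hn : 0 < n) :
    update (rampVec n z n) ⟨n - 1, by omega⟩ (rampVec n z (n - 1) ⟨n - 1, by omega⟩) =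
      rampVec n z (n - 1) := by
  refine update_eq_iff.2 ⟨rfl, fun j hj => ?_⟩
  have hj_lt : (j : ℕ) < n - 1 := by
    have := Fin.val_ne_of_ne hj
    dsimp only at this
    omega
  simp only [rampVec, ramp]
  rw [min_eq_left (by omega), min_eq_left (by omega)]

/-- the bounded-difference constant `n-k` for the function `d = dsel`
is tight: there is a nonnegative input vector, a coordinate, and a new nonnegative value
for that coordinate so that the value of `d` changes by exactly `n-k`. -/
theorem dsel_bounded_differences_tight
    (n k z : ℕ) (hzk : z < k) (hkn : k < n) :
    ∃ t : Fin n → ℝ, (∀ j, 0 ≤ t j) ∧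
      ∃ (i : Fin n) (ti' : ℝ), 0 ≤ ti' ∧
        |(dsel n k z t : ℝ) - (dsel n k z (Function.update t i ti') : ℝ)| = (n : ℝ) - k := by
  refine ⟨rampVec n z n, fun j => le_max_left _ _, ⟨n - 1, by omega⟩,
    rampVec n z (n - 1) ⟨n - 1, by omega⟩, le_max_left _ _, ?_⟩
  rw [update_rampVec_last (by omega), dsel_rampVec_self hzk hkn.le, dsel_rampVec_pred hzk hkn,
    abs_sub_comm, abs_of_nonneg (sub_nonneg.2 (by exact_mod_cast hkn.le))]
end

section
/- Let T'_1,...,T'_n be i.i.d. exponential random variables with rate λ(k−z), T'_(i) their order statistics, and define the residual waiting time T'_SC = min_{d∈{k,...,n}} ((k−z)/(d−z))·T'_(d). For d in {k,...,n} and t ≥ 0 let C_d(t) = { T'_(k) > t(d−z)/(k−z) } ∩ ⋂_{i=d+1}^{n} { T'_(i) − T'_(i−1) > t/(k−z) }. Then for every d in {k,...,n}, C_d(t) ⊆ { T'_SC > t }; consequently Pr{ T'_SC > t } ≥ max_{d∈{k,...,n}} Pr(C_d(t)). -/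
open MeasureTheory ProbabilityTheory Real Finset

/-- The residual waiting time `T'_SC = min_{d ∈ {k,…,n}} ((k-z)/(d-z)) ⬝ T'_(d)`. -/
noncomputable def TSC' (n k z : ℕ) (hkn : k ≤ n) (T' : Fin n → ℝ) : ℝ :=
  (Finset.Icc k n).inf' (Finset.nonempty_Icc.mpr hkn) fun d =>
    ((k : ℝ) - z) / ((d : ℝ) - z) * orderStat T' d

/-! Let `a = t/(k-z)`. On `C_d(t)` the order statistics satisfy `T'_(m) > a(m-z)` for every
`m ∈ {k,…,n}`: for `m ≤ d` because `T'_(m) ≥ T'_(k) > a(d-z) ≥ a(m-z)`, and for `m > d` because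
each further gap adds more than `a`. This is exactly the event `{T'_SC > t}`, and the bound on
probabilities is monotonicity of the measure. -/

lemma orderStat_monotoneOn {n : ℕ} (f : Fin n → ℝ) : MonotoneOn (orderStat f) (Set.Iic n) := by
  intro a ha b hb hab
  set l := (List.ofFn f).insertionSort (· ≤ ·)
  have hlen : l.length = n := by rw [List.length_insertionSort, List.length_ofFn]
  rcases Nat.eq_zero_or_pos n with rfl | hn
  · simp_all
  have ha' : a - 1 < l.length := by simp only [Set.mem_Iic] at ha; omega
  have hb' : b - 1 < l.length := by simp only [Set.mem_Iic] at hb; omega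
  unfold orderStat
  rw [List.getD_eq_getElem _ _ ha', List.getD_eq_getElem _ _ hb']
  exact (List.pairwise_insertionSort _ _).rel_get_of_le
    (a := ⟨a - 1, ha'⟩) (b := ⟨b - 1, hb'⟩) (Fin.mk_le_mk.mpr (by omega))

lemma mul_sub_lt_of_increments_gt {x : ℕ → ℝ} {a z : ℝ} {k d n : ℕ} (ha : 0 ≤ a)
    (hx : MonotoneOn x (Set.Icc k n)) (hkd : k ≤ d) (hk : a * (d - z) < x k)
    (hgap : ∀ i ∈ Ioc d n, a < x i - x (i - 1)) :
    ∀ m ∈ Icc k n, a * (m - z) < x m := by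
  intro m hm
  obtain ⟨hkm, hmn⟩ := mem_Icc.mp hm
  clear hm
  induction m, hkm using Nat.le_induction with
  | base =>
    have : a * (k - z) ≤ a * (d - z) := by gcongr
    linarith
  | succ m hkm ih =>
    push_cast
    by_cases hmd : m + 1 ≤ d
    · have hle : x k ≤ x (m + 1) := hx ⟨le_rfl, by omega⟩ ⟨by omega, hmn⟩ (by omega)
      have : a * (m + 1 - z) ≤ a * (d - z) := by gcongr; exact_mod_cast hmd
      linarith
    · have hstep := hgap (m + 1) (mem_Ioc.mpr ⟨by omega, hmn⟩)
      rw [Nat.add_sub_cancel] at hstep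
      linarith [ih (by omega)]

lemma lt_TSC'_iff {n k z : ℕ} (hzk : z < k) (hkn : k ≤ n) (f : Fin n → ℝ) (t : ℝ) :
    t < TSC' n k z hkn f ↔ ∀ m ∈ Icc k n, t / ((k : ℝ) - z) * ((m : ℝ) - z) < orderStat f m := by
  have hkz : (0 : ℝ) < k - z := sub_pos.mpr (by exact_mod_cast hzk)
  rw [TSC', lt_inf'_iff]
  refine forall₂_congr fun m hm => ?_
  have hmz : (0 : ℝ) < m - z := sub_pos.mpr (by exact_mod_cast hzk.trans_le (mem_Icc.mp hm).1)
  rw [div_mul_eq_mul_div, lt_div_iff₀ hmz, div_mul_eq_mul_div, div_lt_iff₀ hkz, mul_comm t, mul_comm (orderStat f m)]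

theorem Cd_subset_residual_waiting_tail_general
    {Ω : Type*} [MeasurableSpace Ω] (μ : Measure Ω)
    (n k z : ℕ) (hzk : z < k) (hkn : k ≤ n)
    (T' : Fin n → Ω → ℝ)
    (t : ℝ) (ht : 0 ≤ t)
    (C : ℕ → Set Ω)
    (hC : ∀ d, C d = {ω | t * ((d : ℝ) - z) / ((k : ℝ) - z) < orderStat (fun i => T' i ω) k ∧
      ∀ i ∈ Finset.Ioc d n,
        t / ((k : ℝ) - z) <
          orderStat (fun i' => T' i' ω) i - orderStat (fun i' => T' i' ω) (i - 1)}) :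
    (∀ d ∈ Finset.Icc k n, C d ⊆ {ω | t < TSC' n k z hkn (fun i => T' i ω)}) ∧
      (Finset.Icc k n).sup' (Finset.nonempty_Icc.mpr hkn) (fun d => μ (C d)) ≤
        μ {ω | t < TSC' n k z hkn (fun i => T' i ω)} := by
  have hkz : (0 : ℝ) < k - z := sub_pos.mpr (by exact_mod_cast hzk)
  have hsub : ∀ d ∈ Icc k n, C d ⊆ {ω | t < TSC' n k z hkn (fun i => T' i ω)} := by
    intro d hd ω hω
    rw [hC] at hω
    obtain ⟨hk, hgap⟩ := hω
    refine (lt_TSC'_iff hzk hkn _ t).mpr ?_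
    exact mul_sub_lt_of_increments_gt (div_nonneg ht hkz.le)
      ((orderStat_monotoneOn _).mono fun m hm => hm.2) (mem_Icc.mp hd).1
      (by rwa [div_mul_eq_mul_div]) hgap
  exact ⟨hsub, sup'_le _ _ fun d hd => measure_mono (hsub d hd)⟩

/-- each event `C_d(t)` is contained in `{ T'_SC > t }`, and
consequently `Pr{ T'_SC > t } ≥ max_{d ∈ {k,…,n}} Pr(C_d(t))`. -/
theorem Cd_subset_residual_waiting_tail
    {Ω : Type*} [MeasurableSpace Ω] (μ : Measure Ω) [IsProbabilityMeasure μ]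
    (n k z : ℕ) (hzk : z < k) (hkn : k ≤ n)
    (lam : ℝ) (hlam : 0 < lam)
    (T' : Fin n → Ω → ℝ)
    (hmeas : ∀ i, Measurable (T' i))
    (hindep : iIndepFun T' μ)
    (hnonneg : ∀ i ω, 0 ≤ T' i ω)
    (hccdf : ∀ i, ∀ t : ℝ, 0 ≤ t →
      μ {ω | t < T' i ω} = ENNReal.ofReal (Real.exp (-(lam * ((k : ℝ) - z)) * t)))
    (t : ℝ) (ht : 0 ≤ t)
    (C : ℕ → Set Ω)
    (hC : ∀ d, C d = {ω | t * ((d : ℝ) - z) / ((k : ℝ) - z) < orderStat (fun i => T' i ω) k ∧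
      ∀ i ∈ Finset.Ioc d n,
        t / ((k : ℝ) - z) <
          orderStat (fun i' => T' i' ω) i - orderStat (fun i' => T' i' ω) (i - 1)}) :
    (∀ d ∈ Finset.Icc k n, C d ⊆ {ω | t < TSC' n k z hkn (fun i => T' i ω)}) ∧
      (Finset.Icc k n).sup' (Finset.nonempty_Icc.mpr hkn) (fun d => μ (C d)) ≤
        μ {ω | t < TSC' n k z hkn (fun i => T' i ω)} :=
  Cd_subset_residual_waiting_tail_general μ n k z hzk hkn T' t ht C hC
end
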